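/- arXiv:1001.0347 — 2 statements merged into one kernel-verified Lean document; each statement's English description precedes it below -/
import Mathlib

section
/- Let R be a reduced root system, > a choice of positive roots, and A a set of pairwise strongly orthogonal roots satisfying property #: for all distinct α₁, α₂ ∈ A and all β > 0, s_{α₁}(β) < 0 implies s_{α₂}(β) > 0. Then for all distinct α₁, α₂ ∈ A and β > 0 with s_{α₁}(β) < 0, one also has s_{α₁}s_{α₂}(β) < 0. -/
open scoped InnerProductSpace

variable {V : Type*} [NormedAddCommGroup V] [InnerProductSpace ℝ V]

/-- The (orthogonal) reflection in the root `α`: `s_α(v) = v - (2⟪v,α⟫/⟪α,α⟫)α`. -/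
noncomputable def sRefl (α v : V) : V := v - (2 * ⟪v, α⟫_ℝ / ⟪α, α⟫_ℝ) • α

/-- The coroot of `α`, identified with a vector via the invariant inner product. -/
noncomputable def coroot (α : V) : V := (2 / ⟪α, α⟫_ℝ) • α

/-- `S_A`: the product of the (commuting) reflections in the pairwise orthogonal
elements of `A`, given by its closed formula. -/
noncomputable def SRefl (A : Finset V) (v : V) : V :=
  v - ∑ α ∈ A, (2 * ⟪v, α⟫_ℝ / ⟪α, α⟫_ℝ) • α

/-- A (reduced) root system in `V`, with the ambient inner product Weyl-invariant. -/
structure IsRootSystem (R : Set V) : Prop where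
  finite : R.Finite
  nonempty : R.Nonempty
  ne_zero : ∀ α ∈ R, α ≠ (0 : V)
  refl_mem : ∀ α ∈ R, ∀ β ∈ R, sRefl α β ∈ R
  integral : ∀ α ∈ R, ∀ β ∈ R, ∃ n : ℤ, 2 * ⟪β, α⟫_ℝ / ⟪α, α⟫_ℝ = (n : ℝ)
  reduced : ∀ α ∈ R, ∀ t : ℝ, t • α ∈ R → t = 1 ∨ t = -1

/-- `α` and `β` are strongly orthogonal: neither their sum nor difference is a root. -/
def StronglyOrthogonal (R : Set V) (α β : V) : Prop := α + β ∉ R ∧ α - β ∉ R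

/-- A strongly orthogonal subset of `R`. -/
def IsSOS (R A : Set V) : Prop := A ⊆ R ∧ A.Pairwise (StronglyOrthogonal R)

/-- A choice of positive roots in `R`. -/
structure IsPositiveSystem (R P : Set V) : Prop where
  subset : P ⊆ R
  mem_or_neg_mem : ∀ α ∈ R, α ∈ P ∨ -α ∈ P
  not_both : ∀ α ∈ P, -α ∉ P
  add_mem : ∀ α ∈ P, ∀ β ∈ P, α + β ∈ R → α + β ∈ P

/-- Property `#(R,>,A)`: for distinct `α₁, α₂ ∈ A` and `β > 0`,
`s_{α₁}(β) < 0` implies `s_{α₂}(β) > 0`. -/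
def PropSharp (P A : Set V) : Prop :=
  ∀ α₁ ∈ A, ∀ α₂ ∈ A, α₁ ≠ α₂ → ∀ β ∈ P, -(sRefl α₁ β) ∈ P → sRefl α₂ β ∈ P

/-- Property `##(R,>,A)`: for disjoint `A₁, A₂ ⊆ A` and `β > 0` with `S_{A₁}(β) < 0`
one has `S_{A₂}(β) > 0` and `S_{A₁}S_{A₂}(β) < 0`. -/
def PropSharpSharp (P : Set V) (A : Finset V) : Prop :=
  ∀ A₁ ⊆ A, ∀ A₂ ⊆ A, Disjoint A₁ A₂ → ∀ β ∈ P, -(SRefl A₁ β) ∈ P →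
    SRefl A₂ β ∈ P ∧ -(SRefl A₁ (SRefl A₂ β)) ∈ P

/-- `R⁺_B = {β : β > 0 ∧ S_B(β) < 0}`. -/
noncomputable def RPlus (P : Set V) (B : Finset V) : Set V :=
  {β | β ∈ P ∧ -(SRefl B β) ∈ P}

/-!
Strongly orthogonal roots `α₁ ≠ ±α₂` are orthogonal: if `⟪α₁, α₂⟫ > 0` one of the Cartan integers
equals `1`, so a reflection turns one root into `±(α₁ - α₂)`, and if `⟪α₁, α₂⟫ < 0` the same
argument applied to `-α₂` yields `α₁ + α₂ ∈ R`. Hence `s_{α₁}` and `s_{α₂}` commute. Applying `#`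
to the positive root `-s_{α₁}(β)`, which `s_{α₁}` sends to `-β < 0`, gives
`-s_{α₂}s_{α₁}(β) > 0`. The case `α₂ = -α₁` is excluded by `#` itself, since `s_{-α} = s_α`.
-/

lemma sRefl_neg (α v : V) : sRefl α (-v) = -sRefl α v := by
  simp only [sRefl, inner_neg_left]
  module

lemma sRefl_neg_left (α v : V) : sRefl (-α) v = sRefl α v := by
  simp only [sRefl, inner_neg_left, inner_neg_right, neg_neg]
  module

lemma sRefl_self {α : V} (hα : α ≠ 0) : sRefl α α = -α := by
  rw [sRefl, mul_div_assoc, div_self (real_inner_self_pos.2 hα).ne', mul_one, two_smul]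
  abel

lemma sRefl_sRefl {α : V} (hα : α ≠ 0) (v : V) : sRefl α (sRefl α v) = v := by
  have hαα : ⟪α, α⟫_ℝ ≠ 0 := (real_inner_self_pos.2 hα).ne'
  simp only [sRefl, inner_sub_left, real_inner_smul_left]
  rw [sub_sub, ← add_smul]
  convert sub_zero v using 2
  convert zero_smul ℝ α using 2
  field_simp
  ring

lemma sRefl_comm_of_inner_eq_zero {α₁ α₂ : V} (h : ⟪α₁, α₂⟫_ℝ = 0) (v : V) :
    sRefl α₁ (sRefl α₂ v) = sRefl α₂ (sRefl α₁ v) := by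
  have h' : ⟪α₂, α₁⟫_ℝ = 0 := by rwa [real_inner_comm]
  simp only [sRefl, inner_sub_left, real_inner_smul_left, h, h', mul_zero, sub_zero]
  module

namespace IsRootSystem

variable {R : Set V} (hR : IsRootSystem R) {α β : V}
include hR

lemma neg_mem (hα : α ∈ R) : -α ∈ R :=
  sRefl_self (hR.ne_zero α hα) ▸ hR.refl_mem α hα α hα

lemma eq_one_of_smul_mem (hα : α ∈ R) {t : ℝ} (ht : 0 < t) (htα : t • α ∈ R) : t = 1 :=
  (hR.reduced α hα t htα).resolve_right (by linarith)

/-- Strict Cauchy–Schwarz: distinct roots are never positively proportional. -/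
lemma inner_lt_norm_mul_norm (hα : α ∈ R) (hβ : β ∈ R) (hne : β ≠ α) :
    ⟪α, β⟫_ℝ < ‖α‖ * ‖β‖ := by
  refine inner_lt_norm_mul_iff_real.2 fun h => hne ?_
  have hα0 : ‖α‖ ≠ 0 := norm_ne_zero_iff.2 (hR.ne_zero α hα)
  have hβα : β = (‖β‖ / ‖α‖) • α := by
    rw [div_eq_inv_mul, mul_smul, h, smul_smul, inv_mul_cancel₀ hα0, one_smul]
  have ht : 0 < ‖β‖ / ‖α‖ :=
    div_pos (norm_pos_iff.2 (hR.ne_zero β hβ)) (norm_pos_iff.2 (hR.ne_zero α hα))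
  rw [hβα, hR.eq_one_of_smul_mem hα ht (hβα ▸ hβ), one_smul]

lemma sub_mem_of_inner_pos (hα : α ∈ R) (hβ : β ∈ R) (hne : β ≠ α) (hpos : 0 < ⟪α, β⟫_ℝ) :
    α - β ∈ R := by
  obtain ⟨n, hn⟩ := hR.integral α hα β hβ
  obtain ⟨m, hm⟩ := hR.integral β hβ α hα
  rw [real_inner_comm] at hn
  have hαα := real_inner_self_pos.2 (hR.ne_zero α hα)
  have hββ := real_inner_self_pos.2 (hR.ne_zero β hβ)
  have hn_pos : (0 : ℝ) < n := hn ▸ by positivity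
  have hm_pos : (0 : ℝ) < m := hm ▸ by positivity
  have hnm : (n : ℝ) * m < 4 := by
    have hCS := hR.inner_lt_norm_mul_norm hα hβ hne
    have hsq : ⟪α, β⟫_ℝ ^ 2 < ⟪α, α⟫_ℝ * ⟪β, β⟫_ℝ := by
      rw [real_inner_self_eq_norm_mul_norm, real_inner_self_eq_norm_mul_norm]
      nlinarith
    rw [← hn, ← hm, div_mul_div_comm, div_lt_iff₀ (by positivity)]
    nlinarith
  have hcartan : n = 1 ∨ m = 1 := by
    have : 0 < n := by exact_mod_cast hn_pos
    have : 0 < m := by exact_mod_cast hm_pos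
    have : n * m < 4 := by exact_mod_cast hnm
    by_contra! h
    nlinarith [show 2 ≤ n by omega, show 2 ≤ m by omega]
  rcases hcartan with rfl | rfl
  · have hmem := hR.neg_mem (hR.refl_mem α hα β hβ)
    rwa [sRefl, real_inner_comm, hn, Int.cast_one, one_smul, neg_sub] at hmem
  · have hmem := hR.refl_mem β hβ α hα
    rwa [sRefl, hm, Int.cast_one, one_smul] at hmem

lemma add_mem_of_inner_neg (hα : α ∈ R) (hβ : β ∈ R) (hne : β ≠ -α) (hneg : ⟪α, β⟫_ℝ < 0) :
    α + β ∈ R := by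
  have hne' : -β ≠ α := fun h => hne (by rw [← h, neg_neg])
  simpa using hR.sub_mem_of_inner_pos hα (hR.neg_mem hβ) hne' (by rwa [inner_neg_right, neg_pos])

lemma inner_eq_zero_of_stronglyOrthogonal (hα : α ∈ R) (hβ : β ∈ R) (hne : β ≠ α)
    (hne' : β ≠ -α) (hso : StronglyOrthogonal R α β) : ⟪α, β⟫_ℝ = 0 := by
  rcases lt_trichotomy ⟪α, β⟫_ℝ 0 with hneg | hzero | hpos
  · exact absurd (hR.add_mem_of_inner_neg hα hβ hne' hneg) hso.1
  · exact hzero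
  · exact absurd (hR.sub_mem_of_inner_pos hα hβ hne hpos) hso.2

end IsRootSystem

/-- Under property `#`, for distinct `α₁, α₂ ∈ A` and `β > 0` with `s_{α₁}(β) < 0`,
one also has `s_{α₁}s_{α₂}(β) < 0`. -/
theorem statement4 (R P A : Set V) (hR : IsRootSystem R)
    (hP : IsPositiveSystem R P) (hA : IsSOS R A) (hsharp : PropSharp P A) :
    ∀ α₁ ∈ A, ∀ α₂ ∈ A, α₁ ≠ α₂ → ∀ β ∈ P, -(sRefl α₁ β) ∈ P →
      -(sRefl α₁ (sRefl α₂ β)) ∈ P := by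
  intro α₁ hα₁ α₂ hα₂ hne β hβ hneg
  have hsharp₁₂ := hsharp α₁ hα₁ α₂ hα₂ hne
  by_cases hdeg : α₂ = -α₁
  · have hpos := hsharp₁₂ β hβ hneg
    rw [hdeg, sRefl_neg_left] at hpos
    exact absurd hneg (hP.not_both _ hpos)
  have horth : ⟪α₁, α₂⟫_ℝ = 0 :=
    hR.inner_eq_zero_of_stronglyOrthogonal (hA.1 hα₁) (hA.1 hα₂) (Ne.symm hne) hdeg
      (hA.2 hα₁ hα₂ hne)
  have hβ' : sRefl α₁ (-sRefl α₁ β) = -β := by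
    rw [sRefl_neg, sRefl_sRefl (hR.ne_zero α₁ (hA.1 hα₁))]
  have hpos := hsharp₁₂ (-sRefl α₁ β) hneg (by rwa [hβ', neg_neg])
  rwa [sRefl_neg, ← sRefl_comm_of_inner_eq_zero horth] at hpos
end

section
/- Let R be an irreducible reduced root system in which all roots have the same length, normalized to 1 (simply-laced, short roots of length 1 under a Weyl-invariant inner product making short roots of length 1). If α, β ∈ R are orthogonal, then (α∨+β∨)/2 is not in the coroot lattice Q∨. -/
/-!
When all roots have length 1, every coroot is `2γ`, so on the coroot lattice the inner product
takes values in `2ℤ` and, by polarization, the squared norm takes values in `4ℤ`. For orthogonal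
roots, `(α∨ + β∨)/2 = α + β` has squared norm `2`.
-/

open scoped InnerProductSpace

variable {V : Type*} [NormedAddCommGroup V] [InnerProductSpace ℝ V]

/-- The root system `R` is irreducible: it is nonempty and admits no partition into two
nonempty mutually orthogonal subsets. -/
def IsIrreducibleRS (R : Set V) : Prop :=
  R.Nonempty ∧ ¬∃ S₁ S₂ : Set V, S₁.Nonempty ∧ S₂.Nonempty ∧ S₁ ∪ S₂ = R ∧
    ∀ s ∈ S₁, ∀ t ∈ S₂, ⟪s, t⟫_ℝ = 0

open AddSubgroup

section InnerLattice

variable {S : Set V} {c : ℝ}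

theorem inner_mem_zmultiples_of_mem_closure
    (hS : ∀ s ∈ S, ∀ t ∈ S, ⟪s, t⟫_ℝ ∈ zmultiples c) {v w : V}
    (hv : v ∈ AddSubgroup.closure S) (hw : w ∈ AddSubgroup.closure S) :
    ⟪v, w⟫_ℝ ∈ zmultiples c := by
  have left : ∀ s ∈ S, ⟪s, w⟫_ℝ ∈ zmultiples c := fun s hs =>
    (closure_le (K := (zmultiples c).comap (innerₗ V s).toAddMonoidHom)).2 (hS s hs) hw
  rw [real_inner_comm]
  exact (closure_le (K := (zmultiples c).comap (innerₗ V w).toAddMonoidHom)).2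
    (fun s hs => by simpa [real_inner_comm] using left s hs) hv

theorem inner_self_mem_zmultiples_of_mem_closure
    (hS : ∀ s ∈ S, ∀ t ∈ S, ⟪s, t⟫_ℝ ∈ zmultiples c)
    (hS₂ : ∀ s ∈ S, ⟪s, s⟫_ℝ ∈ zmultiples (2 * c)) {v : V} (hv : v ∈ AddSubgroup.closure S) :
    ⟪v, v⟫_ℝ ∈ zmultiples (2 * c) := by
  induction hv using AddSubgroup.closure_induction with
  | mem s hs => exact hS₂ s hs
  | zero => simp
  | neg y _ hy => simpa using hy
  | add y z hy' hz' hy hz =>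
    obtain ⟨k, hk⟩ := mem_zmultiples_iff.1 (inner_mem_zmultiples_of_mem_closure hS hy' hz')
    have hyz : 2 * ⟪y, z⟫_ℝ ∈ zmultiples (2 * c) :=
      mem_zmultiples_iff.2 ⟨k, by rw [← hk, zsmul_eq_mul, zsmul_eq_mul]; ring⟩
    have hexp : ⟪y + z, y + z⟫_ℝ = ⟪y, y⟫_ℝ + ⟪z, z⟫_ℝ + 2 * ⟪y, z⟫_ℝ := by
      rw [real_inner_add_add_self]; ring
    rw [hexp]
    exact add_mem (add_mem hy hz) hyz

end InnerLattice

section UnitRoots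

variable {R : Set V}

theorem coroot_eq_two_smul {γ : V} (hγ : ‖γ‖ = 1) : coroot γ = (2 : ℝ) • γ := by
  rw [coroot, real_inner_self_eq_norm_sq, hγ]; norm_num

theorem inner_coroot_mem_zmultiples_two (hR : IsRootSystem R) (hlen : ∀ α ∈ R, ‖α‖ = 1)
    {γ δ : V} (hγ : γ ∈ R) (hδ : δ ∈ R) : ⟪coroot γ, coroot δ⟫_ℝ ∈ zmultiples (2 : ℝ) := by
  obtain ⟨n, hn⟩ := hR.integral δ hδ γ hγ
  rw [real_inner_self_eq_norm_sq, hlen δ hδ] at hn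
  refine mem_zmultiples_iff.2 ⟨n, ?_⟩
  rw [coroot_eq_two_smul (hlen γ hγ), coroot_eq_two_smul (hlen δ hδ), real_inner_smul_left,
    real_inner_smul_right, zsmul_eq_mul, ← hn]
  ring

theorem inner_self_mem_zmultiples_four_of_mem_corootLattice (hR : IsRootSystem R)
    (hlen : ∀ α ∈ R, ‖α‖ = 1) {v : V} (hv : v ∈ AddSubgroup.closure (coroot '' R)) :
    ⟪v, v⟫_ℝ ∈ zmultiples (4 : ℝ) := by
  have h := inner_self_mem_zmultiples_of_mem_closure (c := 2) ?_ ?_ hv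
  · simpa only [show (2 : ℝ) * 2 = 4 by norm_num] using h
  · rintro _ ⟨γ, hγ, rfl⟩ _ ⟨δ, hδ, rfl⟩
    exact inner_coroot_mem_zmultiples_two hR hlen hγ hδ
  · rintro _ ⟨γ, hγ, rfl⟩
    refine mem_zmultiples_iff.2 ⟨1, ?_⟩
    rw [coroot_eq_two_smul (hlen γ hγ), real_inner_smul_left, real_inner_smul_right,
      real_inner_self_eq_norm_sq, hlen γ hγ]
    norm_num

end UnitRoots

theorem statement13_general (R : Set V) (hR : IsRootSystem R)
    (hlen : ∀ α ∈ R, ‖α‖ = 1) (α β : V) (hα : α ∈ R) (hβ : β ∈ R)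
    (horth : ⟪α, β⟫_ℝ = 0) :
    (1 / 2 : ℝ) • (coroot α + coroot β) ∉ AddSubgroup.closure (coroot '' R) := by
  intro hmem
  have half_sum : (1 / 2 : ℝ) • (coroot α + coroot β) = α + β := by
    rw [coroot_eq_two_smul (hlen α hα), coroot_eq_two_smul (hlen β hβ), ← smul_add, smul_smul]
    norm_num
  have norm_sq : ⟪α + β, α + β⟫_ℝ = 2 := by
    rw [real_inner_add_add_self, horth, real_inner_self_eq_norm_sq, real_inner_self_eq_norm_sq,
      hlen α hα, hlen β hβ]
    norm_num
  obtain ⟨k, hk⟩ := mem_zmultiples_iff.1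
    (inner_self_mem_zmultiples_four_of_mem_corootLattice hR hlen (half_sum ▸ hmem))
  rw [norm_sq, zsmul_eq_mul] at hk
  have : k * 4 = 2 := by exact_mod_cast hk
  omega

/-- In an irreducible simply-laced root system all of whose roots have length `1`,
for orthogonal roots `α, β` the vector `(α∨+β∨)/2` is not in the coroot lattice. -/
theorem statement13 (R : Set V) (hR : IsRootSystem R) (hirr : IsIrreducibleRS R)
    (hlen : ∀ α ∈ R, ‖α‖ = 1) (α β : V) (hα : α ∈ R) (hβ : β ∈ R)
    (horth : ⟪α, β⟫_ℝ = 0) :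
    (1 / 2 : ℝ) • (coroot α + coroot β) ∉ AddSubgroup.closure (coroot '' R) :=
  statement13_general R hR hlen α β hα hβ horth
end
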